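/- Let I be an open real interval, K₁, K₂, c₁, c₂ ∈ ℝ, and let w : [0,1] × I → ℝ be C⁴. Suppose that for all (x,t) ∈ [0,1] × I: w_tt + w_xxxx − w_xxtt = 0, and for all t ∈ I: w(0,t) = w_x(0,t) = 0, w_xx(1,t) = −K₁ c₁, and w_xtt(1,t) − w_xxx(1,t) = −K₂ c₂. Define E(t) = ½∫₀¹ w_t(x,t)² dx + ½∫₀¹ w_xx(x,t)² dx + ½∫₀¹ w_xt(x,t)² dx. Then for all t ∈ I, E'(t) = −K₁ c₁ w_xt(1,t) − K₂ c₂ w_t(1,t). -/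

import Mathlib

open Real Set

/-- `w_t`: partial derivative of `w` in time. -/
noncomputable def pt (w : ℝ → ℝ → ℝ) (x t : ℝ) : ℝ := deriv (fun s => w x s) t

/-- `w_x`: partial derivative of `w` in space. -/
noncomputable def px (w : ℝ → ℝ → ℝ) (x t : ℝ) : ℝ := deriv (fun y => w y t) x

/-- `w_tt`. -/
noncomputable def ptt (w : ℝ → ℝ → ℝ) (x t : ℝ) : ℝ := deriv (fun s => pt w x s) t

/-- `w_xt`: spatial derivative of `w_t`. -/
noncomputable def pxt (w : ℝ → ℝ → ℝ) (x t : ℝ) : ℝ := deriv (fun y => pt w y t) x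

/-- `w_xx`. -/
noncomputable def pxx (w : ℝ → ℝ → ℝ) (x t : ℝ) : ℝ := deriv (fun y => px w y t) x

/-- `w_xxx`. -/
noncomputable def pxxx (w : ℝ → ℝ → ℝ) (x t : ℝ) : ℝ := deriv (fun y => pxx w y t) x

/-- `w_xxxx`. -/
noncomputable def pxxxx (w : ℝ → ℝ → ℝ) (x t : ℝ) : ℝ := deriv (fun y => pxxx w y t) x

/-- `w_xtt`: time derivative of `w_xt`. -/
noncomputable def pxtt (w : ℝ → ℝ → ℝ) (x t : ℝ) : ℝ := deriv (fun s => pxt w x s) t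

/-- `w_xxtt`: second spatial derivative of `w_tt`. -/
noncomputable def pxxtt (w : ℝ → ℝ → ℝ) (x t : ℝ) : ℝ :=
  deriv (fun y => deriv (fun z => ptt w z t) y) x

/-- The energy E(t) = ½∫₀¹ w_t² + ½∫₀¹ w_xx² + ½∫₀¹ w_xt² dx. -/
noncomputable def energy (w : ℝ → ℝ → ℝ) (t : ℝ) : ℝ :=
  (1/2) * (∫ x in (0:ℝ)..1, (pt w x t) ^ 2)
    + (1/2) * (∫ x in (0:ℝ)..1, (pxx w x t) ^ 2)
    + (1/2) * (∫ x in (0:ℝ)..1, (pxt w x t) ^ 2)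

/-- The auxiliary functional ϱ(t) = ∫₀¹ ( w_t(x w_x − α w) + w_xt[(1−α)w_x + x w_xx] ) dx. -/
noncomputable def rhoFun (w : ℝ → ℝ → ℝ) (α : ℝ) (t : ℝ) : ℝ :=
  ∫ x in (0:ℝ)..1,
    (pt w x t * (x * px w x t - α * w x t)
      + pxt w x t * ((1 - α) * px w x t + x * pxx w x t))

/-!
Along a solution of `w_tt + w_xxxx - w_xxtt = 0` the energy density
`e = (w_t² + w_xx² + w_xt²) / 2` obeys the local conservation law `e_t = Φ_x` with flux
`Φ = w_t (w_xtt - w_xxx) + w_xx w_xt`: expanding `Φ_x`, the terms `w_xt w_xxx` cancel and the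
equation turns `w_t (w_xxtt - w_xxxx)` into `w_t w_tt`. Differentiating under the integral sign
and integrating the conservation law over `[0, 1]` gives `E'(t) = Φ(1, t) - Φ(0, t)`. The clamped
end makes `Φ(0, t)` vanish, and the boundary conditions at `x = 1` turn `Φ(1, t)` into the claimed
value.
-/

open Function Filter Topology

/-- Partial derivatives are taken through the Fréchet derivative, so that the symmetry of second
derivatives is available. -/
noncomputable def dirDeriv (v : ℝ × ℝ) (g : ℝ × ℝ → ℝ) (p : ℝ × ℝ) : ℝ := fderiv ℝ g p v

local notation "∂ₓ" => dirDeriv (1, 0)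
local notation "∂ₜ" => dirDeriv (0, 1)

section Plane

variable {g : ℝ × ℝ → ℝ}

theorem ContDiff.contDiff_dirDeriv {m n : WithTop ℕ∞} (hg : ContDiff ℝ n g) (hmn : m + 1 ≤ n)
    (v : ℝ × ℝ) : ContDiff ℝ m (dirDeriv v g) :=
  (hg.fderiv_right hmn).clm_apply contDiff_const

theorem ContDiff.differentiable_dirDeriv {n : WithTop ℕ∞} (hg : ContDiff ℝ n g) (hn : 2 ≤ n)
    (u : ℝ × ℝ) : Differentiable ℝ (dirDeriv u g) :=
  (hg.contDiff_dirDeriv (m := 1) hn u).differentiable one_ne_zero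

theorem ContDiff.differentiable_dirDeriv₂ {n : WithTop ℕ∞} (hg : ContDiff ℝ n g) (hn : 3 ≤ n)
    (u v : ℝ × ℝ) : Differentiable ℝ (dirDeriv u (dirDeriv v g)) :=
  (hg.contDiff_dirDeriv (m := 2) hn v).differentiable_dirDeriv le_rfl u

theorem ContDiff.differentiable_dirDeriv₃ {n : WithTop ℕ∞} (hg : ContDiff ℝ n g) (hn : 4 ≤ n)
    (u v z : ℝ × ℝ) : Differentiable ℝ (dirDeriv u (dirDeriv v (dirDeriv z g))) :=
  (hg.contDiff_dirDeriv (m := 3) hn z).differentiable_dirDeriv₂ le_rfl u v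

theorem DifferentiableAt.hasDerivAt_slice_fst {x t : ℝ} (hg : DifferentiableAt ℝ g (x, t)) :
    HasDerivAt (fun y => g (y, t)) (∂ₓ g (x, t)) x :=
  hg.hasFDerivAt.comp_hasDerivAt x ((hasDerivAt_id x).prodMk (hasDerivAt_const x t))

theorem DifferentiableAt.hasDerivAt_slice_snd {x t : ℝ} (hg : DifferentiableAt ℝ g (x, t)) :
    HasDerivAt (fun s => g (x, s)) (∂ₜ g (x, t)) t :=
  hg.hasFDerivAt.comp_hasDerivAt t ((hasDerivAt_const t x).prodMk (hasDerivAt_id t))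

theorem deriv_slice_fst {f : ℝ → ℝ → ℝ} (hg : Differentiable ℝ g)
    (hf : ∀ x t, f x t = g (x, t)) (x t : ℝ) : deriv (fun y => f y t) x = ∂ₓ g (x, t) := by
  simp only [hf]
  exact (hg _).hasDerivAt_slice_fst.deriv

theorem deriv_slice_snd {f : ℝ → ℝ → ℝ} (hg : Differentiable ℝ g)
    (hf : ∀ x t, f x t = g (x, t)) (x t : ℝ) : deriv (fun s => f x s) t = ∂ₜ g (x, t) := by
  simp only [hf]
  exact (hg _).hasDerivAt_slice_snd.deriv

theorem dirDeriv_snd_eq_zero_of_eventually_eq_zero {x t : ℝ} (hg : DifferentiableAt ℝ g (x, t))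
    (h : ∀ᶠ s in 𝓝 t, g (x, s) = 0) : ∂ₜ g (x, t) = 0 :=
  hg.hasDerivAt_slice_snd.unique ((hasDerivAt_const t 0).congr_of_eventuallyEq h)

theorem dirDeriv_comm (hg : ContDiff ℝ 2 g) (u v : ℝ × ℝ) :
    dirDeriv u (dirDeriv v g) = dirDeriv v (dirDeriv u g) := by
  have hd : Differentiable ℝ (fderiv ℝ g) :=
    (hg.fderiv_right (m := 1) le_rfl).differentiable one_ne_zero
  have hsecond : ∀ u v p, dirDeriv u (dirDeriv v g) p = fderiv ℝ (fderiv ℝ g) p u v := by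
    intro u v p
    change fderiv ℝ (fun q => fderiv ℝ g q v) p u = _
    simp [fderiv_clm_apply (hd p) (differentiableAt_const v)]
  ext p
  rw [hsecond, hsecond,
    hg.contDiffAt.isSymmSndFDerivAt (by simp [minSmoothness_of_isRCLikeNormedField]) u v]

theorem hasDerivAt_intervalIntegral_slice (hg : ContDiff ℝ 1 g) (a b t : ℝ) :
    HasDerivAt (fun s => ∫ x in a..b, g (x, s)) (∫ x in a..b, ∂ₜ g (x, t)) t := by
  have hg' : Continuous (∂ₜ g) := (hg.contDiff_dirDeriv (m := 0) le_rfl _).continuous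
  obtain ⟨C, hC⟩ : ∃ C, ∀ p ∈ uIcc a b ×ˢ Metric.closedBall t 1, ‖∂ₜ g p‖ ≤ C :=
    (isCompact_uIcc.prod (isCompact_closedBall t 1)).exists_bound_of_continuousOn hg'.continuousOn
  have hslice : ∀ {f : ℝ × ℝ → ℝ}, Continuous f → ∀ s, Continuous fun x => f (x, s) :=
    fun hf s => hf.comp (continuous_id.prodMk continuous_const)
  refine (intervalIntegral.hasDerivAt_integral_of_dominated_loc_of_deriv_le (bound := fun _ => C)
    (Metric.closedBall_mem_nhds t one_pos)
    (Eventually.of_forall fun s => (hslice hg.continuous s).aestronglyMeasurable)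
    ((hslice hg.continuous t).intervalIntegrable a b) (hslice hg' t).aestronglyMeasurable
    (MeasureTheory.ae_of_all _ fun x hx s hs => hC (x, s) ⟨uIoc_subset_uIcc hx, hs⟩)
    intervalIntegrable_const
    (MeasureTheory.ae_of_all _ fun x _ s _ =>
      ((hg.differentiable one_ne_zero) (x, s)).hasDerivAt_slice_snd)).2

end Plane

noncomputable def energyDensity (g : ℝ × ℝ → ℝ) (p : ℝ × ℝ) : ℝ :=
  ((∂ₜ g p) ^ 2 + (∂ₓ (∂ₓ g) p) ^ 2 + (∂ₓ (∂ₜ g) p) ^ 2) / 2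

noncomputable def energyFlux (g : ℝ × ℝ → ℝ) (p : ℝ × ℝ) : ℝ :=
  ∂ₜ g p * (∂ₓ (∂ₜ (∂ₜ g)) p - ∂ₓ (∂ₓ (∂ₓ g)) p) + ∂ₓ (∂ₓ g) p * ∂ₓ (∂ₜ g) p

section Energy

variable {g : ℝ × ℝ → ℝ}

theorem contDiff_energyDensity (hg : ContDiff ℝ 3 g) : ContDiff ℝ 1 (energyDensity g) := by
  have h2 : ∀ u v, ContDiff ℝ 1 (dirDeriv u (dirDeriv v g)) := fun u v =>
    (hg.contDiff_dirDeriv (m := 2) (by norm_num) v).contDiff_dirDeriv (by norm_num) u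
  have ht := hg.contDiff_dirDeriv (m := 1) (by norm_num) (0, 1)
  have hxx := h2 (1, 0) (1, 0)
  have hxt := h2 (1, 0) (0, 1)
  unfold energyDensity
  fun_prop

theorem dirDeriv_snd_energyDensity (hg : ContDiff ℝ 3 g) (p : ℝ × ℝ) :
    ∂ₜ (energyDensity g) p = ∂ₜ g p * ∂ₜ (∂ₜ g) p + ∂ₓ (∂ₓ g) p * ∂ₜ (∂ₓ (∂ₓ g)) p
      + ∂ₓ (∂ₜ g) p * ∂ₜ (∂ₓ (∂ₜ g)) p := by
  obtain ⟨x, t⟩ := p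
  have h1 := hg.differentiable_dirDeriv (by norm_num)
  have h2 := hg.differentiable_dirDeriv₂ le_rfl
  have hslice := ((((h1 (0, 1) (x, t)).hasDerivAt_slice_snd.fun_pow 2).fun_add
    ((h2 (1, 0) (1, 0) (x, t)).hasDerivAt_slice_snd.fun_pow 2)).fun_add
    ((h2 (1, 0) (0, 1) (x, t)).hasDerivAt_slice_snd.fun_pow 2)).div_const 2
  refine ((contDiff_energyDensity hg).differentiable one_ne_zero (x, t)).hasDerivAt_slice_snd.unique
    (hslice.congr_deriv ?_)
  push_cast
  ring

theorem hasDerivAt_energyFlux_fst (hg : ContDiff ℝ 4 g) (x t : ℝ) :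
    HasDerivAt (fun y => energyFlux g (y, t))
      (∂ₓ (∂ₜ g) (x, t) * (∂ₓ (∂ₜ (∂ₜ g)) (x, t) - ∂ₓ (∂ₓ (∂ₓ g)) (x, t))
        + ∂ₜ g (x, t) * (∂ₓ (∂ₓ (∂ₜ (∂ₜ g))) (x, t) - ∂ₓ (∂ₓ (∂ₓ (∂ₓ g))) (x, t))
        + ∂ₓ (∂ₓ (∂ₓ g)) (x, t) * ∂ₓ (∂ₜ g) (x, t)
        + ∂ₓ (∂ₓ g) (x, t) * ∂ₓ (∂ₓ (∂ₜ g)) (x, t)) x := by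
  have h1 := hg.differentiable_dirDeriv (by norm_num)
  have h2 := hg.differentiable_dirDeriv₂ (by norm_num)
  have h3 := hg.differentiable_dirDeriv₃ le_rfl
  have := (((h1 (0, 1) (x, t)).hasDerivAt_slice_fst.fun_mul
    ((h3 (1, 0) (0, 1) (0, 1) (x, t)).hasDerivAt_slice_fst.fun_sub
      (h3 (1, 0) (1, 0) (1, 0) (x, t)).hasDerivAt_slice_fst)).fun_add
    ((h2 (1, 0) (1, 0) (x, t)).hasDerivAt_slice_fst.fun_mul
      (h2 (1, 0) (0, 1) (x, t)).hasDerivAt_slice_fst))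
  exact this.congr_deriv (by ring)

theorem hasDerivAt_energyFlux_fst_of_rayleigh (hg : ContDiff ℝ 4 g) {x t : ℝ}
    (hpde : ∂ₜ (∂ₜ g) (x, t) + ∂ₓ (∂ₓ (∂ₓ (∂ₓ g))) (x, t) - ∂ₓ (∂ₓ (∂ₜ (∂ₜ g))) (x, t) = 0) :
    HasDerivAt (fun y => energyFlux g (y, t)) (∂ₜ (energyDensity g) (x, t)) x := by
  have hcomm₁ := dirDeriv_comm (hg.contDiff_dirDeriv (m := 2) (by norm_num) (0, 1)) (0, 1) (1, 0)
  have hcomm₂ := dirDeriv_comm (hg.contDiff_dirDeriv (m := 2) (by norm_num) (1, 0)) (0, 1) (1, 0)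
  have hcomm₃ := dirDeriv_comm (hg.of_le (by norm_num)) (0, 1) (1, 0)
  refine (hasDerivAt_energyFlux_fst hg x t).congr_deriv ?_
  rw [dirDeriv_snd_energyDensity (hg.of_le (by norm_num)), hcomm₁, hcomm₂, hcomm₃]
  linear_combination (-∂ₜ g (x, t)) * hpde

theorem hasDerivAt_integral_energyDensity_of_rayleigh (hg : ContDiff ℝ 4 g) {a b t : ℝ}
    (hpde : ∀ x ∈ uIcc a b,
      ∂ₜ (∂ₜ g) (x, t) + ∂ₓ (∂ₓ (∂ₓ (∂ₓ g))) (x, t) - ∂ₓ (∂ₓ (∂ₜ (∂ₜ g))) (x, t) = 0) :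
    HasDerivAt (fun s => ∫ x in a..b, energyDensity g (x, s))
      (energyFlux g (b, t) - energyFlux g (a, t)) t := by
  have hdens := contDiff_energyDensity (hg.of_le (by norm_num))
  have hpower : Continuous (∂ₜ (energyDensity g)) :=
    (hdens.contDiff_dirDeriv (m := 0) le_rfl _).continuous
  rw [← intervalIntegral.integral_eq_sub_of_hasDerivAt
    (fun x hx => hasDerivAt_energyFlux_fst_of_rayleigh hg (hpde x hx))
    ((hpower.comp (continuous_id.prodMk continuous_const)).intervalIntegrable a b)]
  exact hasDerivAt_intervalIntegral_slice hdens a b t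

theorem energyFlux_eq_zero_of_clamped (hg : ContDiff ℝ 2 g) {x t : ℝ}
    (h₀ : ∀ᶠ s in 𝓝 t, g (x, s) = 0) (h₁ : ∀ᶠ s in 𝓝 t, ∂ₓ g (x, s) = 0) :
    energyFlux g (x, t) = 0 := by
  have hvel : ∂ₜ g (x, t) = 0 :=
    dirDeriv_snd_eq_zero_of_eventually_eq_zero (hg.differentiable two_ne_zero _) h₀
  have hrot : ∂ₓ (∂ₜ g) (x, t) = 0 := by
    rw [dirDeriv_comm hg]
    exact dirDeriv_snd_eq_zero_of_eventually_eq_zero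
      ((hg.contDiff_dirDeriv (m := 1) (by norm_num) _).differentiable one_ne_zero _) h₁
  simp [energyFlux, hvel, hrot]

end Energy

section Beam

variable {w : ℝ → ℝ → ℝ}

theorem pt_eq_dirDeriv (hw : ContDiff ℝ 4 (uncurry w)) (x t : ℝ) :
    pt w x t = ∂ₜ (uncurry w) (x, t) :=
  deriv_slice_snd (hw.differentiable (by norm_num)) (fun _ _ => rfl) x t

theorem px_eq_dirDeriv (hw : ContDiff ℝ 4 (uncurry w)) (x t : ℝ) :
    px w x t = ∂ₓ (uncurry w) (x, t) :=
  deriv_slice_fst (hw.differentiable (by norm_num)) (fun _ _ => rfl) x t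

theorem ptt_eq_dirDeriv (hw : ContDiff ℝ 4 (uncurry w)) (x t : ℝ) :
    ptt w x t = ∂ₜ (∂ₜ (uncurry w)) (x, t) :=
  deriv_slice_snd (hw.differentiable_dirDeriv (by norm_num) _) (pt_eq_dirDeriv hw) x t

theorem pxt_eq_dirDeriv (hw : ContDiff ℝ 4 (uncurry w)) (x t : ℝ) :
    pxt w x t = ∂ₓ (∂ₜ (uncurry w)) (x, t) :=
  deriv_slice_fst (hw.differentiable_dirDeriv (by norm_num) _) (pt_eq_dirDeriv hw) x t

theorem pxx_eq_dirDeriv (hw : ContDiff ℝ 4 (uncurry w)) (x t : ℝ) :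
    pxx w x t = ∂ₓ (∂ₓ (uncurry w)) (x, t) :=
  deriv_slice_fst (hw.differentiable_dirDeriv (by norm_num) _) (px_eq_dirDeriv hw) x t

theorem pxxx_eq_dirDeriv (hw : ContDiff ℝ 4 (uncurry w)) (x t : ℝ) :
    pxxx w x t = ∂ₓ (∂ₓ (∂ₓ (uncurry w))) (x, t) :=
  deriv_slice_fst (hw.differentiable_dirDeriv₂ (by norm_num) _ _) (pxx_eq_dirDeriv hw) x t

theorem pxxxx_eq_dirDeriv (hw : ContDiff ℝ 4 (uncurry w)) (x t : ℝ) :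
    pxxxx w x t = ∂ₓ (∂ₓ (∂ₓ (∂ₓ (uncurry w)))) (x, t) :=
  deriv_slice_fst (hw.differentiable_dirDeriv₃ le_rfl _ _ _) (pxxx_eq_dirDeriv hw) x t

theorem pxtt_eq_dirDeriv (hw : ContDiff ℝ 4 (uncurry w)) (x t : ℝ) :
    pxtt w x t = ∂ₓ (∂ₜ (∂ₜ (uncurry w))) (x, t) := by
  rw [← dirDeriv_comm (hw.contDiff_dirDeriv (m := 2) (by norm_num) _)]
  exact deriv_slice_snd (hw.differentiable_dirDeriv₂ (by norm_num) _ _) (pxt_eq_dirDeriv hw) x t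

theorem pxxtt_eq_dirDeriv (hw : ContDiff ℝ 4 (uncurry w)) (x t : ℝ) :
    pxxtt w x t = ∂ₓ (∂ₓ (∂ₜ (∂ₜ (uncurry w)))) (x, t) :=
  deriv_slice_fst (hw.differentiable_dirDeriv₃ le_rfl _ _ _)
    (deriv_slice_fst (hw.differentiable_dirDeriv₂ (by norm_num) _ _) (ptt_eq_dirDeriv hw)) x t

theorem energy_eq_integral_energyDensity (hw : ContDiff ℝ 4 (uncurry w)) :
    energy w = fun s => ∫ x in (0 : ℝ)..1, energyDensity (uncurry w) (x, s) := by
  funext s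
  have hsq : ∀ {f : ℝ × ℝ → ℝ}, Continuous f →
      IntervalIntegrable (fun x => f (x, s) ^ 2) MeasureTheory.volume 0 1 :=
    fun hf => ((hf.comp (continuous_id.prodMk continuous_const)).pow 2).intervalIntegrable 0 1
  have h₁ := hsq (hw.differentiable_dirDeriv (by norm_num) (0, 1)).continuous
  have h₂ := hsq (hw.differentiable_dirDeriv₂ (by norm_num) (1, 0) (1, 0)).continuous
  have h₃ := hsq (hw.differentiable_dirDeriv₂ (by norm_num) (1, 0) (0, 1)).continuous
  simp only [energy, energyDensity, pt_eq_dirDeriv hw, pxx_eq_dirDeriv hw, pxt_eq_dirDeriv hw]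
  rw [intervalIntegral.integral_div, intervalIntegral.integral_add (h₁.add h₂) h₃,
    intervalIntegral.integral_add h₁ h₂]
  ring

end Beam

theorem stmt_4 (a b K₁ K₂ c₁ c₂ : ℝ) (w : ℝ → ℝ → ℝ)
    (hw : ContDiff ℝ 4 (Function.uncurry w))
    (hpde : ∀ x ∈ Set.Icc (0:ℝ) 1, ∀ t ∈ Set.Ioo a b,
      ptt w x t + pxxxx w x t - pxxtt w x t = 0)
    (hbc0 : ∀ t ∈ Set.Ioo a b, w 0 t = 0 ∧ px w 0 t = 0)
    (hbc1 : ∀ t ∈ Set.Ioo a b, pxx w 1 t = -K₁ * c₁)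
    (hbc2 : ∀ t ∈ Set.Ioo a b, pxtt w 1 t - pxxx w 1 t = -K₂ * c₂) :
    ∀ t ∈ Set.Ioo a b,
      HasDerivAt (energy w) (-K₁ * c₁ * pxt w 1 t - K₂ * c₂ * pt w 1 t) t := by
  intro t ht
  have hrayleigh : ∀ x ∈ uIcc 0 1, ∂ₜ (∂ₜ (uncurry w)) (x, t)
      + ∂ₓ (∂ₓ (∂ₓ (∂ₓ (uncurry w)))) (x, t) - ∂ₓ (∂ₓ (∂ₜ (∂ₜ (uncurry w)))) (x, t) = 0 := by
    intro x hx
    rw [uIcc_of_le zero_le_one] at hx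
    simpa only [ptt_eq_dirDeriv hw, pxxxx_eq_dirDeriv hw, pxxtt_eq_dirDeriv hw] using hpde x hx t ht
  have hclamped : energyFlux (uncurry w) (0, t) = 0 := by
    refine energyFlux_eq_zero_of_clamped (hw.of_le (by norm_num)) ?_ ?_ <;>
      filter_upwards [Ioo_mem_nhds ht.1 ht.2] with s hs
    · exact (hbc0 s hs).1
    · exact px_eq_dirDeriv hw 0 s ▸ (hbc0 s hs).2
  have hfree : energyFlux (uncurry w) (1, t) = -K₁ * c₁ * pxt w 1 t - K₂ * c₂ * pt w 1 t := by
    have hmoment := hbc1 t ht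
    have hshear := hbc2 t ht
    rw [pxx_eq_dirDeriv hw] at hmoment
    rw [pxtt_eq_dirDeriv hw, pxxx_eq_dirDeriv hw] at hshear
    rw [energyFlux, pxt_eq_dirDeriv hw, pt_eq_dirDeriv hw, hmoment, hshear]
    ring
  rw [energy_eq_integral_energyDensity hw]
  simpa only [hclamped, hfree, sub_zero] using
    hasDerivAt_integral_energyDensity_of_rayleigh hw hrayleigh
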